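/- Let n ≥ 1, let λ be symmetric nonnegative real edge weights on the complete graph with vertex set {1,…,n}, and let B > 0 be a real number such that Σ_{k ≠ j} λ_{jk} ≤ B for every vertex j (every weighted row sum is at most B). If x_1,…,x_n are complex numbers with |x_i| > 2√B for every i, then for every vertex i one has μ_{G∖i} ≠ 0 and | μ_G / μ_{G∖i} | > √B; in particular μ_G ≠ 0. -/

import Mathlib

open Finset Classical

/-- A matching of the complete graph induced on the vertex set `S ⊆ Fin n`,
represented as a finset of ordered pairs `(j, k)` with `j < k` (each such pair
encoding the unordered edge `{j, k}`), no two of which share a vertex. -/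
def IsMatching (n : ℕ) (S : Finset (Fin n)) (M : Finset (Fin n × Fin n)) : Prop :=
  (∀ p ∈ M, p.1 < p.2 ∧ p.1 ∈ S ∧ p.2 ∈ S) ∧
  ∀ p ∈ M, ∀ q ∈ M, p ≠ q → p.1 ≠ q.1 ∧ p.1 ≠ q.2 ∧ p.2 ≠ q.1 ∧ p.2 ≠ q.2

/-- The matching polynomial of the complete graph induced on `S ⊆ Fin n`, with
edge weights `lam` and vertex variables `x`:
`μ_S = Σ_{M matching of S} (Π_{i ∈ S not covered by M} x i) · (Π_{{j,k} ∈ M} lam j k)`. -/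
noncomputable def mu (n : ℕ) (lam : Fin n → Fin n → ℝ) (x : Fin n → ℂ)
    (S : Finset (Fin n)) : ℂ :=
  ∑ M ∈ univ.filter (fun M : Finset (Fin n × Fin n) => IsMatching n S M),
    (∏ v ∈ S.filter (fun v => ∀ p ∈ M, v ≠ p.1 ∧ v ≠ p.2), x v) *
    ∏ p ∈ M, (lam p.1 p.2 : ℂ)

/-! Expanding `μ_S` along a vertex `i ∈ S` (either `i` is uncovered or it is matched to some `k`)
gives `μ_S = x_i μ_{S∖i} + Σ_k λ_{ik} μ_{S∖i∖k}`, i.e. `α_i(S) = x_i + Σ_k λ_{ik} / α_k(S∖i)`.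
By strong induction on `S`, every `|α_k(S∖i)| > √B`, so the sum has modulus at most
`B / √B = √B` and `|α_i(S)| > 2√B - √B = √B`; in particular `μ_S ≠ 0`, the base case being
`μ_∅ = 1`. -/

section SortedPair

variable {α β : Type*} [LinearOrder α]

/-- `IsMatching` stores the edge `{i, k}` as this pair. -/
def sortedPair (i k : α) : α × α := (min i k, max i k)

lemma sortedPair_fst_lt {i k : α} (h : i ≠ k) : (sortedPair i k).1 < (sortedPair i k).2 :=
  min_lt_max.mpr h

lemma eq_or_eq_sortedPair_iff {v i k : α} :
    (v = (sortedPair i k).1 ∨ v = (sortedPair i k).2) ↔ v = i ∨ v = k := by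
  rcases le_total i k with h | h <;> simp [sortedPair, h, or_comm]

lemma sortedPair_eq {p : α × α} (h : p.1 < p.2) :
    sortedPair p.1 p.2 = p ∧ sortedPair p.2 p.1 = p := by
  simp [sortedPair, h.le]

lemma sortedPair_mem {s : Finset α} {i k : α} (hi : i ∈ s) (hk : k ∈ s) :
    (sortedPair i k).1 ∈ s ∧ (sortedPair i k).2 ∈ s := by
  rcases le_total i k with h | h <;> simp [sortedPair, h, hi, hk]

lemma apply_sortedPair {f : α → α → β} (hf : ∀ j k, f j k = f k j) (i k : α) :
    f (sortedPair i k).1 (sortedPair i k).2 = f i k := by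
  rcases le_total i k with h | h <;> simp [sortedPair, h, hf k i]

end SortedPair

lemma lt_norm_add_sum_smul {ι E : Type*} [SeminormedAddCommGroup E] [NormedSpace ℝ E]
    (s : Finset ι) {w : ι → ℝ} {z : ι → E} {a : E} {c : ℝ} (hc : 0 < c)
    (hw : ∀ k ∈ s, 0 ≤ w k) (hsum : ∑ k ∈ s, w k ≤ c ^ 2) (hz : ∀ k ∈ s, ‖z k‖ ≤ c⁻¹)
    (ha : 2 * c < ‖a‖) : c < ‖a + ∑ k ∈ s, w k • z k‖ := by
  have hsmall : ‖∑ k ∈ s, w k • z k‖ ≤ c :=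
    calc ‖∑ k ∈ s, w k • z k‖ ≤ ∑ k ∈ s, w k * ‖z k‖ := by
          refine (norm_sum_le _ _).trans (le_of_eq (sum_congr rfl fun k hk => ?_))
          rw [norm_smul, Real.norm_of_nonneg (hw k hk)]
      _ ≤ ∑ k ∈ s, w k * c⁻¹ :=
          sum_le_sum fun k hk => mul_le_mul_of_nonneg_left (hz k hk) (hw k hk)
      _ = (∑ k ∈ s, w k) * c⁻¹ := (sum_mul _ _ _).symm
      _ ≤ c ^ 2 * c⁻¹ := mul_le_mul_of_nonneg_right hsum (inv_nonneg.mpr hc.le)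
      _ = c := by field_simp
  have htriangle := norm_sub_norm_le a (-∑ k ∈ s, w k • z k)
  rw [norm_neg, sub_neg_eq_add] at htriangle
  linarith

section Matchings

variable {n : ℕ} {S : Finset (Fin n)} {M : Finset (Fin n × Fin n)} {i k : Fin n}

lemma isMatching_iff :
    IsMatching n S M ↔ (∀ p ∈ M, p.1 < p.2 ∧ p.1 ∈ S ∧ p.2 ∈ S) ∧
      ∀ p ∈ M, ∀ q ∈ M, ∀ v, (v = p.1 ∨ v = p.2) → (v = q.1 ∨ v = q.2) → p = q := by
  refine and_congr_right fun _ => ⟨fun h p hp q hq v hvp hvq => ?_, fun h p hp q hq hpq => ?_⟩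
  · by_contra hpq
    have := h p hp q hq hpq
    rcases hvp with rfl | rfl <;> rcases hvq with h' | h' <;> simp_all
  · exact ⟨fun e => hpq (h p hp q hq _ (Or.inl rfl) (Or.inl e)),
      fun e => hpq (h p hp q hq _ (Or.inl rfl) (Or.inr e)),
      fun e => hpq (h p hp q hq _ (Or.inr rfl) (Or.inl e)),
      fun e => hpq (h p hp q hq _ (Or.inr rfl) (Or.inr e))⟩

lemma IsMatching.eq_of_incident (hM : IsMatching n S M) {p q : Fin n × Fin n} (hp : p ∈ M)
    (hq : q ∈ M) {v : Fin n} (hvp : v = p.1 ∨ v = p.2) (hvq : v = q.1 ∨ v = q.2) : p = q :=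
  (isMatching_iff.mp hM).2 p hp q hq v hvp hvq

lemma IsMatching.avoids_of_notMem (hM : IsMatching n S M) {v : Fin n} (hv : v ∉ S) :
    ∀ p ∈ M, v ≠ p.1 ∧ v ≠ p.2 :=
  fun p hp => ⟨fun h => hv (h ▸ (hM.1 p hp).2.1), fun h => hv (h ▸ (hM.1 p hp).2.2)⟩

lemma isMatching_erase_iff :
    IsMatching n (S.erase i) M ↔ IsMatching n S M ∧ ∀ p ∈ M, i ≠ p.1 ∧ i ≠ p.2 := by
  constructor
  · intro hM
    refine ⟨⟨fun p hp => ?_, hM.2⟩, hM.avoids_of_notMem (S.notMem_erase i)⟩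
    obtain ⟨hlt, h1, h2⟩ := hM.1 p hp
    exact ⟨hlt, mem_of_mem_erase h1, mem_of_mem_erase h2⟩
  · rintro ⟨hM, hi⟩
    refine ⟨fun p hp => ?_, hM.2⟩
    obtain ⟨hlt, h1, h2⟩ := hM.1 p hp
    exact ⟨hlt, mem_erase.mpr ⟨(hi p hp).1.symm, h1⟩, mem_erase.mpr ⟨(hi p hp).2.symm, h2⟩⟩

lemma IsMatching.insert_sortedPair (hM : IsMatching n ((S.erase i).erase k) M) (hi : i ∈ S)
    (hk : k ∈ S) (hik : i ≠ k) : IsMatching n S (insert (sortedPair i k) M) := by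
  have hMS : IsMatching n S M := (isMatching_erase_iff.mp (isMatching_erase_iff.mp hM).1).1
  have hdisj : ∀ q ∈ M, ∀ v, (v = (sortedPair i k).1 ∨ v = (sortedPair i k).2) →
      ¬(v = q.1 ∨ v = q.2) := by
    have hi' : i ∉ (S.erase i).erase k := fun h => notMem_erase i S (mem_of_mem_erase h)
    have hk' : k ∉ (S.erase i).erase k := notMem_erase k _
    intro q hq v hv
    rcases eq_or_eq_sortedPair_iff.mp hv with rfl | rfl <;>
      exact not_or.mpr (hM.avoids_of_notMem ‹_› q hq)
  refine isMatching_iff.mpr ⟨fun p hp => ?_, fun p hp q hq v hvp hvq => ?_⟩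
  · rcases mem_insert.mp hp with rfl | hp
    · exact ⟨sortedPair_fst_lt hik, sortedPair_mem hi hk⟩
    · exact hMS.1 p hp
  · rcases mem_insert.mp hp with rfl | hp <;> rcases mem_insert.mp hq with rfl | hq
    · rfl
    · exact (hdisj q hq v hvp hvq).elim
    · exact (hdisj p hp v hvq hvp).elim
    · exact hM.eq_of_incident hp hq hvp hvq

lemma sortedPair_notMem_of_isMatching (hM : IsMatching n ((S.erase i).erase k) M) :
    sortedPair i k ∉ M := by
  intro he
  have hi := hM.avoids_of_notMem (fun h => notMem_erase i S (mem_of_mem_erase h)) _ he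
  rcases eq_or_eq_sortedPair_iff.mpr (Or.inl rfl : i = i ∨ i = k) with h | h
  · exact hi.1 h
  · exact hi.2 h

lemma IsMatching.erase_sortedPair (hM : IsMatching n S M) (he : sortedPair i k ∈ M) :
    IsMatching n ((S.erase i).erase k) (M.erase (sortedPair i k)) := by
  have hM' : IsMatching n S (M.erase (sortedPair i k)) :=
    ⟨fun p hp => hM.1 p (mem_of_mem_erase hp),
      fun p hp q hq => hM.2 p (mem_of_mem_erase hp) q (mem_of_mem_erase hq)⟩
  have havoid : ∀ v, (v = i ∨ v = k) → ∀ p ∈ M.erase (sortedPair i k), v ≠ p.1 ∧ v ≠ p.2 := by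
    intro v hv p hp
    rw [← not_or]
    intro hvp
    exact (ne_of_mem_erase hp) (hM.eq_of_incident (mem_of_mem_erase hp) he hvp
      (eq_or_eq_sortedPair_iff.mpr hv))
  exact isMatching_erase_iff.mpr
    ⟨isMatching_erase_iff.mpr ⟨hM', havoid i (Or.inl rfl)⟩, havoid k (Or.inr rfl)⟩

noncomputable def matchings (n : ℕ) (S : Finset (Fin n)) : Finset (Finset (Fin n × Fin n)) :=
  univ.filter (fun M : Finset (Fin n × Fin n) => IsMatching n S M)

noncomputable def matchingWeight (lam : Fin n → Fin n → ℝ) (x : Fin n → ℂ)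
    (S : Finset (Fin n)) (M : Finset (Fin n × Fin n)) : ℂ :=
  (∏ v ∈ S.filter (fun v => ∀ p ∈ M, v ≠ p.1 ∧ v ≠ p.2), x v) * ∏ p ∈ M, (lam p.1 p.2 : ℂ)

lemma mem_matchings :
    M ∈ matchings n S ↔ IsMatching n S M := by
  simp [matchings]

lemma mu_eq_sum_matchingWeight (lam : Fin n → Fin n → ℝ) (x : Fin n → ℂ) :
    mu n lam x S = ∑ M ∈ matchings n S, matchingWeight lam x S M :=
  rfl

lemma mu_empty (lam : Fin n → Fin n → ℝ) (x : Fin n → ℂ) : mu n lam x ∅ = 1 := by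
  have h : matchings n ∅ = {∅} := by
    ext M
    rw [mem_matchings, mem_singleton, ← not_nonempty_iff_eq_empty]
    refine ⟨fun hM ⟨p, hp⟩ => notMem_empty _ (hM.1 p hp).2.1, fun hM => ?_⟩
    rw [not_nonempty_iff_eq_empty.mp hM]
    exact ⟨by simp, by simp⟩
  simp [mu_eq_sum_matchingWeight, h, matchingWeight]

lemma matchingWeight_of_avoids (lam : Fin n → Fin n → ℝ) (x : Fin n → ℂ) (hi : i ∈ S)
    (hM : ∀ p ∈ M, i ≠ p.1 ∧ i ≠ p.2) :
    matchingWeight lam x S M = x i * matchingWeight lam x (S.erase i) M := by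
  rw [matchingWeight, matchingWeight, filter_erase, ← mul_assoc,
    mul_prod_erase _ _ (mem_filter.mpr ⟨hi, hM⟩)]

lemma matchingWeight_insert_sortedPair {lam : Fin n → Fin n → ℝ}
    (hsymm : ∀ j k, lam j k = lam k j) (x : Fin n → ℂ) (he : sortedPair i k ∉ M) :
    matchingWeight lam x S (insert (sortedPair i k) M) =
      lam i k * matchingWeight lam x ((S.erase i).erase k) M := by
  have huncovered : S.filter (fun v => ∀ p ∈ insert (sortedPair i k) M, v ≠ p.1 ∧ v ≠ p.2) =
      ((S.erase i).erase k).filter (fun v => ∀ p ∈ M, v ≠ p.1 ∧ v ≠ p.2) := by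
    ext v
    simp only [mem_filter, forall_mem_insert, mem_erase, ← not_or, eq_or_eq_sortedPair_iff]
    tauto
  rw [matchingWeight, matchingWeight, huncovered, prod_insert he,
    apply_sortedPair (f := fun j k => (lam j k : ℂ)) (by simp [hsymm])]
  ring

lemma sum_matchingWeight_avoiding (lam : Fin n → Fin n → ℝ) (x : Fin n → ℂ) (hi : i ∈ S) :
    ∑ M ∈ (matchings n S).filter (fun M => ∀ p ∈ M, i ≠ p.1 ∧ i ≠ p.2),
        matchingWeight lam x S M = x i * mu n lam x (S.erase i) := by
  have h : (matchings n S).filter (fun M => ∀ p ∈ M, i ≠ p.1 ∧ i ≠ p.2) =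
      matchings n (S.erase i) := by
    ext M
    rw [mem_filter, mem_matchings, mem_matchings, isMatching_erase_iff]
  rw [h, mu_eq_sum_matchingWeight, mul_sum]
  exact sum_congr rfl fun M hM =>
    matchingWeight_of_avoids lam x hi (isMatching_erase_iff.mp (mem_matchings.mp hM)).2

lemma sum_matchingWeight_containing {lam : Fin n → Fin n → ℝ}
    (hsymm : ∀ j k, lam j k = lam k j) (x : Fin n → ℂ) (hi : i ∈ S) (hk : k ∈ S) (hik : i ≠ k) :
    ∑ M ∈ (matchings n S).filter (fun M => sortedPair i k ∈ M), matchingWeight lam x S M =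
      lam i k * mu n lam x ((S.erase i).erase k) := by
  rw [mu_eq_sum_matchingWeight, mul_sum]
  symm
  refine sum_nbij' (insert (sortedPair i k)) (fun M => M.erase (sortedPair i k))
    (fun M hM => ?_) (fun M hM => ?_) (fun M hM => ?_) (fun M hM => ?_) (fun M hM => ?_)
  all_goals simp only [mem_filter, mem_matchings] at hM ⊢
  · exact ⟨hM.insert_sortedPair hi hk hik, mem_insert_self _ _⟩
  · exact hM.1.erase_sortedPair hM.2
  · exact erase_insert (sortedPair_notMem_of_isMatching hM)
  · exact insert_erase hM.2
  · exact (matchingWeight_insert_sortedPair hsymm x (sortedPair_notMem_of_isMatching hM)).symm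

lemma filter_covering_eq_biUnion :
    (matchings n S).filter (fun M => ¬∀ p ∈ M, i ≠ p.1 ∧ i ≠ p.2) =
      (S.erase i).biUnion fun k => (matchings n S).filter fun M => sortedPair i k ∈ M := by
  ext M
  simp only [mem_filter, mem_biUnion, mem_matchings, mem_erase, ← not_or, not_forall, not_not]
  constructor
  · rintro ⟨hM, p, hp, hip⟩
    obtain ⟨hlt, h1, h2⟩ := hM.1 p hp
    rcases hip with rfl | rfl
    · exact ⟨p.2, ⟨hlt.ne', h2⟩, hM, by rwa [(sortedPair_eq hlt).1]⟩
    · exact ⟨p.1, ⟨hlt.ne, h1⟩, hM, by rwa [(sortedPair_eq hlt).2]⟩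
  · rintro ⟨k, -, hM, he⟩
    exact ⟨hM, _, he, eq_or_eq_sortedPair_iff.mpr (Or.inl rfl)⟩

lemma pairwiseDisjoint_filter_sortedPair_mem :
    (↑(S.erase i) : Set (Fin n)).PairwiseDisjoint
      fun k => (matchings n S).filter fun M => sortedPair i k ∈ M := by
  intro k hk k' _ hkk'
  refine disjoint_filter.mpr fun M hM he he' => hkk' ?_
  have heq := (mem_matchings.mp hM).eq_of_incident he he' (v := i)
    (eq_or_eq_sortedPair_iff.mpr (Or.inl rfl)) (eq_or_eq_sortedPair_iff.mpr (Or.inl rfl))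
  have hk' : k = (sortedPair i k').1 ∨ k = (sortedPair i k').2 :=
    heq ▸ eq_or_eq_sortedPair_iff.mpr (Or.inr rfl)
  exact (eq_or_eq_sortedPair_iff.mp hk').resolve_left (ne_of_mem_erase hk)

theorem mu_eq_mul_add_sum {lam : Fin n → Fin n → ℝ} (hsymm : ∀ j k, lam j k = lam k j)
    (x : Fin n → ℂ) (hi : i ∈ S) :
    mu n lam x S = x i * mu n lam x (S.erase i) +
      ∑ k ∈ S.erase i, (lam i k : ℂ) * mu n lam x ((S.erase i).erase k) := by
  rw [mu_eq_sum_matchingWeight,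
    ← sum_filter_add_sum_filter_not _ fun M => ∀ p ∈ M, i ≠ p.1 ∧ i ≠ p.2,
    sum_matchingWeight_avoiding lam x hi, filter_covering_eq_biUnion,
    sum_biUnion pairwiseDisjoint_filter_sortedPair_mem]
  congr 1
  refine sum_congr rfl fun k hk => ?_
  obtain ⟨hki, hk⟩ := mem_erase.mp hk
  exact sum_matchingWeight_containing hsymm x hi hk hki.symm

end Matchings

theorem mu_ne_zero_and_lt_norm_div {n : ℕ} {lam : Fin n → Fin n → ℝ}
    (hsymm : ∀ j k, lam j k = lam k j) (hnonneg : ∀ j k, 0 ≤ lam j k) {B : ℝ} (hB : 0 < B)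
    (hrow : ∀ j : Fin n, ∑ k ∈ univ \ {j}, lam j k ≤ B) {x : Fin n → ℂ}
    (hx : ∀ i, 2 * √B < ‖x i‖) (S : Finset (Fin n)) :
    mu n lam x S ≠ 0 ∧ ∀ i ∈ S, √B < ‖mu n lam x S / mu n lam x (S.erase i)‖ := by
  induction S using Finset.strongInduction with
  | H S ih =>
  have hratio : ∀ i ∈ S, √B < ‖mu n lam x S / mu n lam x (S.erase i)‖ := by
    intro i hi
    set T := S.erase i
    obtain ⟨hT, hTratio⟩ := ih T (erase_ssubset hi)
    have hexpand : mu n lam x S / mu n lam x T =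
        x i + ∑ k ∈ T, lam i k • (mu n lam x (T.erase k) / mu n lam x T) := by
      simp only [mu_eq_mul_add_sum hsymm x hi, add_div, mul_div_cancel_right₀ _ hT, sum_div,
        Complex.real_smul, mul_div_assoc, T]
    rw [hexpand]
    refine lt_norm_add_sum_smul T (Real.sqrt_pos.mpr hB) (fun k _ => hnonneg i k) ?_
      (fun k hk => ?_) (hx i)
    · rw [Real.sq_sqrt hB.le]
      refine (sum_le_sum_of_subset_of_nonneg ?_ fun k _ _ => hnonneg i k).trans (hrow i)
      rw [sdiff_singleton_eq_erase]
      exact erase_subset_erase i (subset_univ S)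
    · rw [norm_div, ← inv_div, ← norm_div]
      exact inv_anti₀ (Real.sqrt_pos.mpr hB) (hTratio k hk).le
  refine ⟨?_, hratio⟩
  rcases S.eq_empty_or_nonempty with rfl | ⟨i, hi⟩
  · rw [mu_empty]
    exact one_ne_zero
  · intro h
    have := hratio i hi
    rw [h, zero_div, norm_zero] at this
    exact (Real.sqrt_nonneg B).not_gt this

theorem graph_cf_disk_general (n : ℕ)
    (lam : Fin n → Fin n → ℝ)
    (hsymm : ∀ j k, lam j k = lam k j)
    (hnonneg : ∀ j k, 0 ≤ lam j k)
    (B : ℝ) (hBpos : 0 < B)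
    (hrow : ∀ j : Fin n, ∑ k ∈ Finset.univ \ {j}, lam j k ≤ B)
    (x : Fin n → ℂ) (hx : ∀ i, 2 * Real.sqrt B < ‖x i‖) :
    (∀ i : Fin n, mu n lam x (Finset.univ \ {i}) ≠ 0 ∧
      Real.sqrt B < ‖mu n lam x Finset.univ / mu n lam x (Finset.univ \ {i})‖) ∧
    mu n lam x Finset.univ ≠ 0 := by
  have key := mu_ne_zero_and_lt_norm_div hsymm hnonneg hBpos hrow hx
  refine ⟨fun i => ?_, (key univ).1⟩
  rw [sdiff_singleton_eq_erase]
  exact ⟨(key _).1, (key univ).2 i (mem_univ i)⟩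

/-- Disk inductive invariant: if every weighted row sum `Σ_{k ≠ j} lam j k` is at
most `B > 0` and `|x i| > 2√B` for every `i`, then for every vertex `i` one has
`μ_{G∖i} ≠ 0` and `|μ_G / μ_{G∖i}| > √B`; in particular `μ_G ≠ 0`. -/
theorem graph_cf_disk (n : ℕ) (hn : 1 ≤ n)
    (lam : Fin n → Fin n → ℝ)
    (hsymm : ∀ j k, lam j k = lam k j)
    (hnonneg : ∀ j k, 0 ≤ lam j k)
    (hdiag : ∀ j, lam j j = 0)
    (B : ℝ) (hBpos : 0 < B)
    (hrow : ∀ j : Fin n, ∑ k ∈ Finset.univ \ {j}, lam j k ≤ B)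
    (x : Fin n → ℂ) (hx : ∀ i, 2 * Real.sqrt B < ‖x i‖) :
    (∀ i : Fin n, mu n lam x (Finset.univ \ {i}) ≠ 0 ∧
      Real.sqrt B < ‖mu n lam x Finset.univ / mu n lam x (Finset.univ \ {i})‖) ∧
    mu n lam x Finset.univ ≠ 0 :=
  graph_cf_disk_general n lam hsymm hnonneg B hBpos hrow x hx
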